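/- Let G be a complete OBDD of width w over a finite variable set X (with respect to some linear order of X), and let Z ⊆ X. Then there exists a complete OBDD over X∖Z (with respect to the induced order) of width at most 2^w that computes the existential projection ∃Z G of the function computed by G. -/

import Mathlib

/-!
Subset construction: if the nodes of layer `p` are replaced by sets of nodes of layer `p` of
`G`, the run on `a` can track the set of nodes that `G` reaches under all assignments agreeing
with `a` outside `Z`, and accepting when that set contains an accepting node computes `∃Z G`
with layers of size at most `2 ^ w`. In this diagram a layer reading a variable of `Z` no longer
depends on the bit read, so it can be short-circuited; what remains is a complete OBDD over
`X ∖ Z` in the induced order.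
-/

set_option autoImplicit false

/-- A complete OBDD over `n` variable layers: the `i`-th layer consists of the nodes
labeled with variable `var i` (for `i < n`), `size i` is the number of nodes in
layer `i`, and after the last layer the run reaches a sink `0`/`1` as given by
`accept`. -/
structure CompleteOBDD (V : Type) (n : ℕ) where
  var : ℕ → V
  var_inj : ∀ i j, i < n → j < n → var i = var j → i = j
  size : ℕ → ℕ
  start : Fin (size 0)
  trans : (i : ℕ) → Fin (size i) → Bool → Fin (size (i + 1))
  accept : Fin (size n) → Bool

namespace CompleteOBDD

variable {V : Type} {n : ℕ}

/-- The node of layer `i` reached from the source under assignment `a`. -/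
def runTo (B : CompleteOBDD V n) (a : V → Bool) : (i : ℕ) → Fin (B.size i)
  | 0 => B.start
  | i + 1 => B.trans i (B.runTo a i) (a (B.var i))

/-- The Boolean value computed by the OBDD on assignment `a`. -/
def eval (B : CompleteOBDD V n) (a : V → Bool) : Bool := B.accept (B.runTo a n)

/-- The set of variables read by the OBDD. -/
def vars [DecidableEq V] (B : CompleteOBDD V n) : Finset V := (Finset.range n).image B.var

/-- The width of a complete OBDD: the maximal size of a variable layer. -/
def width (B : CompleteOBDD V n) : ℕ := (Finset.range n).sup B.size

end CompleteOBDD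

namespace CompleteOBDD

variable {V : Type} {n : ℕ}

def Oblivious (B : CompleteOBDD V n) (j : ℕ) : Prop :=
  ∀ u b b', B.trans j u b = B.trans j u b'

def jump (B : CompleteOBDD V n) (p : ℕ) : (d : ℕ) → Fin (B.size p) → Fin (B.size (p + d))
  | 0, u => u
  | d + 1, u => B.trans (p + d) (B.jump p d u) false

theorem runTo_add_eq_jump (B : CompleteOBDD V n) (a : V → Bool) (p d : ℕ)
    (hB : ∀ j, p ≤ j → j < p + d → B.Oblivious j) :
    B.runTo a (p + d) = B.jump p d (B.runTo a p) := by
  induction d with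
  | zero => rfl
  | succ d ih =>
    rw [jump, ← ih fun j hpj hj => hB j hpj (by omega)]
    exact hB (p + d) (by omega) (by omega) _ _ _

theorem runTo_eq_cast_jump (B : CompleteOBDD V n) (a : V → Bool) {p d q : ℕ} (h : p + d = q)
    (hB : ∀ j, p ≤ j → j < q → B.Oblivious j) :
    B.runTo a q = Fin.cast (congrArg B.size h) (B.jump p d (B.runTo a p)) := by
  subst h
  exact runTo_add_eq_jump B a p d hB

theorem runTo_congr (B : CompleteOBDD V n) {σ τ : V → Bool} {p : ℕ}
    (h : ∀ j, j < p → σ (B.var j) = τ (B.var j)) : B.runTo σ p = B.runTo τ p := by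
  induction p with
  | zero => rfl
  | succ p ih =>
    rw [runTo, runTo, ih fun j hj => h j (by omega), h p (by omega)]

theorem runTo_update (B : CompleteOBDD V n) [DecidableEq V] (σ : V → Bool) (c : Bool)
    {p : ℕ} (hp : p < n) : B.runTo (Function.update σ (B.var p) c) p = B.runTo σ p :=
  B.runTo_congr fun j hj =>
    Function.update_of_ne (fun h => hj.ne (B.var_inj j p (hj.trans hp) hp h)) c σ

theorem width_le (B : CompleteOBDD V n) {p : ℕ} (hp : p < n) : B.size p ≤ B.width :=
  Finset.le_sup (Finset.mem_range.mpr hp)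

section Contract

variable (H : CompleteOBDD V n) {E : ℕ → ℕ} {m : ℕ} (hE : StrictMono E) (hm : E m = n)

def contract : CompleteOBDD V m where
  var := H.var ∘ E
  var_inj _ _ hi hj h := hE.injective (H.var_inj _ _ (hm ▸ hE hi) (hm ▸ hE hj) h)
  size := H.size ∘ E
  start := Fin.cast (congrArg H.size (Nat.zero_add _)) (H.jump 0 (E 0) H.start)
  trans k u b := Fin.cast (congrArg H.size (Nat.add_sub_of_le (hE (Nat.lt_succ_self k))))
    (H.jump (E k + 1) (E (k + 1) - (E k + 1)) (H.trans (E k) u b))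
  accept u := H.accept (Fin.cast (congrArg H.size hm) u)

variable {H}

theorem runTo_contract (hH : ∀ j ∉ Set.range E, H.Oblivious j) (a : V → Bool) (k : ℕ) :
    (H.contract hE hm).runTo a k = H.runTo a (E k) := by
  induction k with
  | zero =>
    refine (H.runTo_eq_cast_jump a (Nat.zero_add _) fun j _ hj => hH j ?_).symm
    rintro ⟨i, rfl⟩
    exact (hE.monotone (Nat.zero_le i)).not_gt hj
  | succ k ih =>
    rw [runTo, ih]
    refine (H.runTo_eq_cast_jump a (Nat.add_sub_of_le (hE (Nat.lt_succ_self k)))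
      fun j hj hj' => hH j ?_).symm
    rintro ⟨i, rfl⟩
    have := hE.lt_iff_lt.mp (Nat.lt_of_succ_le hj)
    have := hE.lt_iff_lt.mp hj'
    omega

theorem eval_contract (hH : ∀ j ∉ Set.range E, H.Oblivious j) (a : V → Bool) :
    (H.contract hE hm).eval a = H.eval a := by
  rw [eval, eval, runTo_contract hE hm hH]
  subst hm
  rfl

theorem width_contract : (H.contract hE hm).width ≤ H.width :=
  Finset.sup_le fun _ hk => H.width_le (hm ▸ hE (Finset.mem_range.mp hk))

end Contract

section SubsetConstruction

variable [DecidableEq V] (G : CompleteOBDD V n) (Z : Finset V)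

def stepSet (p : ℕ) (b : Bool) (S : Finset (Fin (G.size p))) : Finset (Fin (G.size (p + 1))) :=
  Finset.univ.filter fun v => ∃ u ∈ S, ∃ c, (G.var p ∈ Z ∨ c = b) ∧ G.trans p u c = v

noncomputable def finsetEquivFin (N : ℕ) : Finset (Fin N) ≃ Fin (2 ^ N) :=
  Fintype.equivFinOfCardEq (by simp [Fintype.card_finset])

noncomputable def subsetConstruction : CompleteOBDD V n where
  var := G.var
  var_inj := G.var_inj
  size p := 2 ^ G.size p
  start := finsetEquivFin _ {G.start}
  trans p s b := finsetEquivFin _ (G.stepSet Z p b ((finsetEquivFin _).symm s))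
  accept s := decide (∃ v ∈ (finsetEquivFin _).symm s, G.accept v = true)

variable {G Z}

theorem mem_runTo_subsetConstruction (a : V → Bool) {p : ℕ} (hp : p ≤ n)
    (v : Fin (G.size p)) :
    v ∈ (finsetEquivFin _).symm ((G.subsetConstruction Z).runTo a p) ↔
      ∃ σ : V → Bool, (∀ x, x ∉ Z → σ x = a x) ∧ G.runTo σ p = v := by
  induction p with
  | zero =>
    simp only [runTo, subsetConstruction, Equiv.symm_apply_apply, Finset.mem_singleton]
    exact ⟨fun h => ⟨a, fun _ _ => rfl, h.symm⟩, fun ⟨_, _, h⟩ => h.symm⟩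
  | succ p ih =>
    have hpn : p < n := hp
    simp only [runTo, subsetConstruction, Equiv.symm_apply_apply, stepSet,
      Finset.mem_filter, Finset.mem_univ, true_and]
    constructor
    · rintro ⟨u, hu, c, hc, rfl⟩
      obtain ⟨σ, hσ, rfl⟩ := (ih hpn.le u).mp hu
      refine ⟨Function.update σ (G.var p) c, fun x hx => ?_, ?_⟩
      · rcases eq_or_ne x (G.var p) with rfl | hne
        · rw [Function.update_self, hc.resolve_left hx]
        · rw [Function.update_of_ne hne, hσ x hx]
      · rw [G.runTo_update σ c hpn, Function.update_self]
    · rintro ⟨σ, hσ, rfl⟩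
      refine ⟨G.runTo σ p, (ih hpn.le _).mpr ⟨σ, hσ, rfl⟩, σ (G.var p), ?_, rfl⟩
      exact (em _).imp_right (hσ _)

theorem eval_subsetConstruction (a : V → Bool) :
    (G.subsetConstruction Z).eval a = true ↔
      ∃ σ : V → Bool, (∀ x, x ∉ Z → σ x = a x) ∧ G.eval σ = true := by
  simp only [eval, subsetConstruction, decide_eq_true_eq]
  constructor
  · rintro ⟨v, hv, hacc⟩
    obtain ⟨σ, hσ, rfl⟩ := (mem_runTo_subsetConstruction a le_rfl v).mp hv
    exact ⟨σ, hσ, hacc⟩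
  · rintro ⟨σ, hσ, hacc⟩
    exact ⟨_, (mem_runTo_subsetConstruction a le_rfl _).mpr ⟨σ, hσ, rfl⟩, hacc⟩

theorem oblivious_subsetConstruction {p : ℕ} (hp : G.var p ∈ Z) :
    (G.subsetConstruction Z).Oblivious p := by
  intro s b b'
  simp only [subsetConstruction, stepSet, hp, true_or, true_and]

theorem width_subsetConstruction : (G.subsetConstruction Z).width ≤ 2 ^ G.width :=
  Finset.sup_le fun _ hp =>
    Nat.pow_le_pow_right two_pos (G.width_le (Finset.mem_range.mp hp))

end SubsetConstruction

end CompleteOBDD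

theorem complete_obdd_exists_projection_general {V : Type} [DecidableEq V] (n : ℕ)
    (G : CompleteOBDD V n) (w : ℕ) (hw : G.width ≤ w) (Z : Finset V) :
    ∃ (m : ℕ) (B : CompleteOBDD V m) (e : ℕ → ℕ),
      (∀ i, i < m → e i < n) ∧
      (∀ i j, i < j → j < m → e i < e j) ∧
      (∀ i, i < m → B.var i = G.var (e i)) ∧
      B.vars = G.vars \ Z ∧
      B.width ≤ 2 ^ w ∧
      (∀ a : V → Bool,
        B.eval a = true ↔ ∃ σ : V → Bool, (∀ x, x ∉ Z → σ x = a x) ∧ G.eval σ = true) := by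
  -- the layers kept are those reading a variable outside `Z`, padded by all indices `≥ n`
  set P : ℕ → Prop := fun j => n ≤ j ∨ G.var j ∉ Z
  have hP : (Set.ofPred P).Infinite :=
    (Set.Ici_infinite n).mono fun _ => Or.inl
  set m := Nat.count P n
  have hE := Nat.nth_strictMono hP
  have hm : Nat.nth P m = n := Nat.nth_count (Or.inl le_rfl)
  have hobl : ∀ j ∉ Set.range (Nat.nth P), (G.subsetConstruction Z).Oblivious j := by
    intro j hj
    rw [Nat.range_nth_of_infinite hP] at hj
    exact CompleteOBDD.oblivious_subsetConstruction (not_not.mp (not_or.mp hj).2)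
  have hlt : ∀ i, i < m → Nat.nth P i < n := fun i => Nat.nth_lt_of_lt_count
  refine ⟨m, (G.subsetConstruction Z).contract hE hm, Nat.nth P, hlt, fun i j hij _ => hE hij,
    fun i _ => rfl, ?_, ?_, fun a => ?_⟩
  · ext x
    simp only [CompleteOBDD.vars, CompleteOBDD.contract, Function.comp_apply, Finset.mem_image,
      Finset.mem_range, Finset.mem_sdiff]
    constructor
    · rintro ⟨k, hk, rfl⟩
      exact ⟨⟨_, hlt k hk, rfl⟩, (Nat.nth_mem_of_infinite hP k).resolve_left (hlt k hk).not_ge⟩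
    · rintro ⟨⟨j, hj, rfl⟩, hjZ⟩
      exact ⟨Nat.count P j, Nat.count_strict_mono (Or.inr hjZ) hj,
        congrArg G.var (Nat.nth_count (Or.inr hjZ))⟩
  · exact (CompleteOBDD.width_contract hE hm).trans
      (CompleteOBDD.width_subsetConstruction.trans (Nat.pow_le_pow_right two_pos hw))
  · rw [CompleteOBDD.eval_contract hE hm hobl, CompleteOBDD.eval_subsetConstruction]

/-- Let `G` be a complete OBDD of width `w` over a finite variable
set `X` (w.r.t. some linear order of `X`) and let `Z ⊆ X`. Then there is a complete
OBDD over `X \ Z`, with respect to the induced order (the new variable order is a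
strictly monotone subsequence of the old one enumerating exactly `X \ Z`), of width
at most `2 ^ w` that computes the existential projection `∃Z G`. -/
theorem complete_obdd_exists_projection {V : Type} [DecidableEq V] (n : ℕ)
    (G : CompleteOBDD V n) (w : ℕ) (hw : G.width ≤ w) (Z : Finset V) (hZ : Z ⊆ G.vars) :
    ∃ (m : ℕ) (B : CompleteOBDD V m) (e : ℕ → ℕ),
      (∀ i, i < m → e i < n) ∧
      (∀ i j, i < j → j < m → e i < e j) ∧
      (∀ i, i < m → B.var i = G.var (e i)) ∧
      B.vars = G.vars \ Z ∧
      B.width ≤ 2 ^ w ∧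
      (∀ a : V → Bool,
        B.eval a = true ↔ ∃ σ : V → Bool, (∀ x, x ∉ Z → σ x = a x) ∧ G.eval σ = true) :=
  complete_obdd_exists_projection_general n G w hw Z
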